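/- For every dimension d ≥ 1 and all ε, γ > 0, the proximity map P_{γ,ε} : ℝ^d → ℝ^d is monotone: for all s, t ∈ ℝ^d one has ⟨P_{γ,ε}(t) − P_{γ,ε}(s), t − s⟩ ≥ 0; moreover it is strictly monotone, i.e. the inequality is strict whenever t ≠ s. -/

import Mathlib

open Classical RealInnerProductSpace

/-- The proximity map of `γ` times the Huber-regularized Euclidean norm. -/
noncomputable def proxHuber {d : ℕ} (γ ε : ℝ) (t : EuclideanSpace ℝ (Fin d)) :
    EuclideanSpace ℝ (Fin d) :=
  if t = 0 then 0 else (max (ε / (ε + γ)) (1 - γ / ‖t‖)) • t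

/-!
`P_{γ,ε}` is the radial map `t ↦ φ(‖t‖) • t` with `φ r = max (ε/(ε+γ)) (1 - γ/r)`, and `φ` is
nondecreasing and bounded below by `c = ε/(ε+γ) > 0`. For any scalars `a, b ≥ c`,
`⟪a t - b s, t - s⟫ = (a+b)/2 ‖t-s‖² + (a-b)(‖t‖²-‖s‖²)/2`; monotonicity of `φ` makes the
second term nonnegative, so the map is strongly monotone with modulus `c`.
-/

section RadialMap

variable {E : Type*} [NormedAddCommGroup E] [InnerProductSpace ℝ E]

theorem inner_smul_sub_smul_sub_self (a b : ℝ) (t s : E) :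
    ⟪a • t - b • s, t - s⟫ =
      (a + b) / 2 * ‖t - s‖ ^ 2 + (a - b) * (‖t‖ ^ 2 - ‖s‖ ^ 2) / 2 := by
  simp only [inner_sub_left, inner_sub_right, real_inner_smul_left,
    real_inner_self_eq_norm_sq, norm_sub_sq_real, real_inner_comm s t]
  ring

theorem mul_norm_sub_sq_le_inner_smul_sub_smul_sub {a b c : ℝ} {t s : E}
    (ha : c ≤ a) (hb : c ≤ b) (hab : 0 ≤ (a - b) * (‖t‖ - ‖s‖)) :
    c * ‖t - s‖ ^ 2 ≤ ⟪a • t - b • s, t - s⟫ := by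
  have hsq : 0 ≤ (a - b) * (‖t‖ ^ 2 - ‖s‖ ^ 2) := by
    have : (a - b) * (‖t‖ ^ 2 - ‖s‖ ^ 2) = (a - b) * (‖t‖ - ‖s‖) * (‖t‖ + ‖s‖) := by ring
    rw [this]
    exact mul_nonneg hab (by positivity)
  rw [inner_smul_sub_smul_sub_self]
  nlinarith [sq_nonneg ‖t - s‖]

theorem mul_norm_sub_sq_le_inner_radial_sub {φ : ℝ → ℝ} {c : ℝ}
    (hφ : MonotoneOn φ (Set.Ioi 0)) (hc : ∀ r, 0 < r → c ≤ φ r) (t s : E) :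
    c * ‖t - s‖ ^ 2 ≤ ⟪φ ‖t‖ • t - φ ‖s‖ • s, t - s⟫ := by
  -- the value of `φ` at `0` is irrelevant, so at a zero vector the factor may be taken to be `c`
  rcases eq_or_ne t 0 with ht | ht
  · rcases eq_or_ne s 0 with hs | hs
    · simp [ht, hs]
    have hφt : φ ‖t‖ • t = c • t := by simp [ht]
    rw [hφt]
    refine mul_norm_sub_sq_le_inner_smul_sub_smul_sub le_rfl (hc _ (norm_pos_iff.2 hs)) ?_
    rw [ht, norm_zero, zero_sub]
    exact mul_nonneg_of_nonpos_of_nonpos (sub_nonpos.2 (hc _ (norm_pos_iff.2 hs)))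
      (neg_nonpos.2 (norm_nonneg s))
  rcases eq_or_ne s 0 with hs | hs
  · have hφs : φ ‖s‖ • s = c • s := by simp [hs]
    rw [hφs]
    refine mul_norm_sub_sq_le_inner_smul_sub_smul_sub (hc _ (norm_pos_iff.2 ht)) le_rfl ?_
    rw [hs, norm_zero, sub_zero]
    exact mul_nonneg (sub_nonneg.2 (hc _ (norm_pos_iff.2 ht))) (norm_nonneg t)
  have ht' : ‖t‖ ∈ Set.Ioi (0 : ℝ) := norm_pos_iff.2 ht
  have hs' : ‖s‖ ∈ Set.Ioi (0 : ℝ) := norm_pos_iff.2 hs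
  refine mul_norm_sub_sq_le_inner_smul_sub_smul_sub (hc _ ht') (hc _ hs') ?_
  rcases le_total ‖t‖ ‖s‖ with h | h
  · exact mul_nonneg_of_nonpos_of_nonpos (sub_nonpos.2 (hφ ht' hs' h)) (sub_nonpos.2 h)
  · exact mul_nonneg (sub_nonneg.2 (hφ hs' ht' h)) (sub_nonneg.2 h)

end RadialMap

theorem proxHuber_eq_smul {d : ℕ} (γ ε : ℝ) (t : EuclideanSpace ℝ (Fin d)) :
    proxHuber γ ε t = max (ε / (ε + γ)) (1 - γ / ‖t‖) • t := by
  unfold proxHuber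
  split_ifs with ht <;> simp [ht]

theorem monotoneOn_max_one_sub_div {c γ : ℝ} (hγ : 0 ≤ γ) :
    MonotoneOn (fun r : ℝ => max c (1 - γ / r)) (Set.Ioi 0) := fun _ hx _ _ hxy =>
  max_le_max le_rfl (sub_le_sub_left (div_le_div_of_nonneg_left hγ hx hxy) 1)

theorem proxHuber_strictly_monotone_general (d : ℕ) (ε γ : ℝ)
    (hε : 0 < ε) (hγ : 0 < γ) (s t : EuclideanSpace ℝ (Fin d)) :
    0 ≤ ⟪proxHuber γ ε t - proxHuber γ ε s, t - s⟫ ∧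
    (t ≠ s → 0 < ⟪proxHuber γ ε t - proxHuber γ ε s, t - s⟫) := by
  have hc : 0 < ε / (ε + γ) := by positivity
  have hstrong : ε / (ε + γ) * ‖t - s‖ ^ 2 ≤ ⟪proxHuber γ ε t - proxHuber γ ε s, t - s⟫ := by
    simpa only [proxHuber_eq_smul] using
      mul_norm_sub_sq_le_inner_radial_sub (monotoneOn_max_one_sub_div hγ.le)
        (fun _ _ => le_max_left _ _) t s
  refine ⟨le_trans (by positivity) hstrong, fun hne => lt_of_lt_of_le ?_ hstrong⟩
  have : 0 < ‖t - s‖ := norm_pos_iff.2 (sub_ne_zero.2 hne)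
  positivity

/-- The proximity map `P_{γ,ε}` is monotone and even strictly monotone. -/
theorem proxHuber_strictly_monotone (d : ℕ) (hd : 1 ≤ d) (ε γ : ℝ)
    (hε : 0 < ε) (hγ : 0 < γ) (s t : EuclideanSpace ℝ (Fin d)) :
    0 ≤ ⟪proxHuber γ ε t - proxHuber γ ε s, t - s⟫ ∧
    (t ≠ s → 0 < ⟪proxHuber γ ε t - proxHuber γ ε s, t - s⟫) :=
  proxHuber_strictly_monotone_general d ε γ hε hγ s t
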